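/- For every integer r ≥ 2 and every family A₁, …, A_r of nonempty pairwise disjoint sets, there exists a commutative semigroup S with zero in which every element is idempotent (a Boolean semigroup) such that Γ(S) is isomorphic to the complete r-partite graph with parts A₁, …, A_r (two vertices adjacent if and only if they lie in different parts). -/

import Mathlib

universe u v w
/-- A commutative semigroup with a zero element `0` satisfying `0 * a = 0`. -/
class CommSemigroupWithZero (S : Type u) extends CommSemigroup S, Zero S where
  zero_mul' : ∀ a : S, 0 * a = 0

/-- The zero-divisor graph of `S`, as a simple graph on all of `S`:
distinct nonzero `x, y` are adjacent iff `x * y = 0`.  (The element `0` and the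
non-zero-divisors are isolated vertices, so adjacency, end vertices and cycles
are exactly those of `Γ(S)`.) -/
def zdGraph (S : Type u) [CommSemigroupWithZero S] : SimpleGraph S where
  Adj x y := x ≠ y ∧ x * y = 0 ∧ x ≠ 0 ∧ y ≠ 0
  symm := by
    constructor
    rintro x y ⟨h1, h2, h3, h4⟩
    exact ⟨h1.symm, by rwa [mul_comm], h4, h3⟩
  loopless := ⟨fun x h => h.1 rfl⟩

/-- `x` is a vertex of `Γ(S)`: a nonzero zero-divisor. -/
def IsVertex (S : Type u) [CommSemigroupWithZero S] (x : S) : Prop :=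
  x ≠ 0 ∧ ∃ y : S, y ≠ 0 ∧ x * y = 0

/-- `x` is an end vertex of `Γ(S)`: it has exactly one neighbour. -/
def IsEndVertex (S : Type u) [CommSemigroupWithZero S] (x : S) : Prop :=
  ∃! y : S, (zdGraph S).Adj x y
/-- The zero-divisor graph of `S` on its vertex set (the nonzero zero-divisors). -/
def zdvGraph (S : Type u) [CommSemigroupWithZero S] :
    SimpleGraph {x : S // x ≠ 0 ∧ ∃ y : S, y ≠ 0 ∧ x * y = 0} where
  Adj a b := a ≠ b ∧ (a : S) * (b : S) = 0
  symm := by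
    constructor
    rintro a b ⟨h1, h2⟩
    exact ⟨h1.symm, by rwa [mul_comm]⟩
  loopless := ⟨fun a h => h.1 rfl⟩

/-- `G` is (isomorphic to) the zero-divisor graph of some commutative semigroup with zero. -/
def IsZDGraphOf {α : Type v} (G : SimpleGraph α) : Prop :=
  ∃ (S : Type u) (inst : CommSemigroupWithZero S), Nonempty ((@zdvGraph S inst) ≃g G)

/-!
Make each part a semilattice under `min` for some linear order and take the `0`-direct union
of the parts. Products within a part stay nonzero and products across parts vanish, so as soon
as there are two nonempty parts every nonzero element is a zero-divisor, and two of them are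
adjacent exactly when they lie in different parts.
-/

abbrev minCommSemigroup (α : Type u) [LinearOrder α] : CommSemigroup α where
  mul := min
  mul_assoc := min_assoc
  mul_comm := min_comm

/-- The disjoint union of the `S i` with a zero adjoined; products across different components
are `0`. -/
abbrev ZeroDirectUnion {ι : Type v} (S : ι → Type u) : Type (max v u) := Option (Σ i, S i)

namespace ZeroDirectUnion

variable {ι : Type v} {S : ι → Type u}

instance : Zero (ZeroDirectUnion S) := ⟨none⟩

lemma zero_def : (0 : ZeroDirectUnion S) = none := rfl

variable [DecidableEq ι] [∀ i, CommSemigroup (S i)]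

instance : Mul (ZeroDirectUnion S) where
  mul
    | some ⟨i, a⟩, some ⟨j, b⟩ => if h : i = j then some ⟨j, (h ▸ a) * b⟩ else 0
    | _, _ => 0

lemma mul_zero' (x : ZeroDirectUnion S) : x * 0 = 0 := by
  rcases x with _ | ⟨i, a⟩ <;> rfl

lemma zero_mul' (x : ZeroDirectUnion S) : 0 * x = 0 := rfl

@[simp]
lemma some_mul_some_self {i : ι} (a b : S i) :
    (some ⟨i, a⟩ : ZeroDirectUnion S) * some ⟨i, b⟩ = some ⟨i, a * b⟩ :=
  dif_pos rfl

lemma some_mul_some_of_ne {i j : ι} (h : i ≠ j) (a : S i) (b : S j) :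
    (some ⟨i, a⟩ : ZeroDirectUnion S) * some ⟨j, b⟩ = 0 :=
  dif_neg h

lemma mul_comm' (x y : ZeroDirectUnion S) : x * y = y * x := by
  rcases x with _ | ⟨i, a⟩ <;> rcases y with _ | ⟨j, b⟩
  · rfl
  · rfl
  · rfl
  by_cases h : i = j
  · subst h
    simp only [some_mul_some_self, mul_comm a b]
  · rw [some_mul_some_of_ne h, some_mul_some_of_ne (Ne.symm h)]

lemma mul_assoc' (x y z : ZeroDirectUnion S) : x * y * z = x * (y * z) := by
  rcases x with _ | ⟨i, a⟩
  · rfl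
  rcases y with _ | ⟨j, b⟩
  · simp only [← zero_def, mul_zero', zero_mul']
  rcases z with _ | ⟨k, c⟩
  · simp only [← zero_def, mul_zero']
  by_cases hij : i = j
  · subst hij
    by_cases hik : i = k
    · subst hik
      simp only [some_mul_some_self, mul_assoc]
    · rw [some_mul_some_self, some_mul_some_of_ne hik, some_mul_some_of_ne hik, mul_zero']
  · rw [some_mul_some_of_ne hij, zero_mul']
    by_cases hjk : j = k
    · subst hjk
      rw [some_mul_some_self, some_mul_some_of_ne hij]
    · rw [some_mul_some_of_ne hjk, mul_zero']

instance : CommSemigroupWithZero (ZeroDirectUnion S) where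
  mul_assoc := mul_assoc'
  mul_comm := mul_comm'
  zero_mul' := zero_mul'

lemma mul_self_of_forall_mul_self (h : ∀ i (a : S i), a * a = a) (x : ZeroDirectUnion S) :
    x * x = x := by
  rcases x with _ | ⟨i, a⟩
  · rfl
  · rw [some_mul_some_self, h]

lemma some_mul_some_eq_zero_iff (a b : Σ i, S i) :
    (some a : ZeroDirectUnion S) * some b = 0 ↔ a.1 ≠ b.1 := by
  obtain ⟨i, a⟩ := a
  obtain ⟨j, b⟩ := b
  by_cases h : i = j
  · subst h
    simp
  · simpa [h] using some_mul_some_of_ne h a b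

variable [Nontrivial ι] [∀ i, Nonempty (S i)]

lemma isVertex_iff_isSome (x : ZeroDirectUnion S) :
    IsVertex (ZeroDirectUnion S) x ↔ x.isSome := by
  refine ⟨fun hx => Option.ne_none_iff_isSome.mp hx.1, fun hx => ?_⟩
  obtain ⟨a, rfl⟩ := Option.isSome_iff_exists.mp hx
  obtain ⟨j, hj⟩ := exists_ne a.1
  obtain ⟨b⟩ := ‹∀ i, Nonempty (S i)› j
  exact ⟨Option.some_ne_none a, some ⟨j, b⟩, Option.some_ne_none _,
    (some_mul_some_eq_zero_iff a ⟨j, b⟩).mpr hj.symm⟩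

def vertexEquiv : (Σ i, S i) ≃ {x : ZeroDirectUnion S // IsVertex (ZeroDirectUnion S) x} :=
  (Equiv.optionIsSomeEquiv _).symm.trans
    (Equiv.subtypeEquivRight fun x => (isVertex_iff_isSome x).symm)

def zdvGraphIso : zdvGraph (ZeroDirectUnion S) ≃g SimpleGraph.completeMultipartiteGraph S :=
  SimpleGraph.Iso.symm
    { toEquiv := vertexEquiv
      map_rel_iff' := fun {a b} => by
        show vertexEquiv a ≠ vertexEquiv b ∧ (some a : ZeroDirectUnion S) * some b = 0 ↔
          a.1 ≠ b.1
        rw [some_mul_some_eq_zero_iff]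
        exact and_iff_right_of_imp fun h hab => h (congrArg Sigma.fst (vertexEquiv.injective hab)) }

end ZeroDirectUnion

theorem stmt12 (r : ℕ) (hr : 2 ≤ r) (A : Fin r → Type u) (hA : ∀ i, Nonempty (A i)) :
    ∃ (S : Type u) (inst : CommSemigroupWithZero S),
      (∀ x : S, x * x = x) ∧
      Nonempty ((@zdvGraph S inst) ≃g SimpleGraph.completeMultipartiteGraph A) := by
  let _ : ∀ i, LinearOrder (A i) := fun _ => IsWellOrder.linearOrder WellOrderingRel
  let _ : ∀ i, CommSemigroup (A i) := fun i => minCommSemigroup (A i)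
  have : Nontrivial (Fin r) := Fin.nontrivial_iff_two_le.mpr hr
  exact ⟨ZeroDirectUnion A, _,
    ZeroDirectUnion.mul_self_of_forall_mul_self fun _ a => min_self a,
    ⟨ZeroDirectUnion.zdvGraphIso⟩⟩
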